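/- Let α⁺, λ⁺, α⁻, λ⁻ > 0 with α⁺ ≤ 1 and α⁻ ≤ 1. Then the mode of the bilateral Gamma density f is x₀ = 0; that is, f is strictly increasing on the open interval (−∞, 0) and strictly decreasing on the open interval (0, ∞). -/

import Mathlib

open MeasureTheory Filter Set Topology

/-- The Gamma(α,λ) density: `λ^α t^(α-1) e^(-λt) / Γ(α)` for `t > 0`, and `0` for `t ≤ 0`. -/
noncomputable def gammaDensity (a l t : ℝ) : ℝ :=
  if 0 < t then l ^ a * t ^ (a - 1) * Real.exp (-l * t) / Real.Gamma a else 0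

/-- The bilateral Gamma density `f(x) = ∫₀^∞ g_{α⁺,λ⁺}(x + y) g_{α⁻,λ⁻}(y) dy`. -/
noncomputable def bilateralGammaDensity (ap lp am lm : ℝ) (x : ℝ) : ℝ :=
  ∫ y in Ioi (0 : ℝ), gammaDensity ap lp (x + y) * gammaDensity am lm y

lemma gammaDensity_of_nonpos {a l t : ℝ} (ht : t ≤ 0) : gammaDensity a l t = 0 := by
  simp [gammaDensity, not_lt.mpr ht]

lemma gammaDensity_nonneg {a l : ℝ} (ha : 0 < a) (hl : 0 < l) (t : ℝ) :
    0 ≤ gammaDensity a l t := by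
  have hΓ := Real.Gamma_pos_of_pos ha
  unfold gammaDensity
  split_ifs with h
  · positivity
  · exact le_rfl

lemma gammaDensity_pos {a l t : ℝ} (ha : 0 < a) (hl : 0 < l) (ht : 0 < t) :
    0 < gammaDensity a l t := by
  have hΓ := Real.Gamma_pos_of_pos ha
  rw [gammaDensity, if_pos ht]
  positivity

lemma gammaDensity_strictAnti {a l s t : ℝ} (ha : 0 < a) (ha1 : a ≤ 1) (hl : 0 < l)
    (hs : 0 < s) (hst : s < t) : gammaDensity a l t < gammaDensity a l s := by
  have hΓ := Real.Gamma_pos_of_pos ha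
  have ht : 0 < t := hs.trans hst
  rw [gammaDensity, gammaDensity, if_pos ht, if_pos hs]
  have h1 : t ^ (a - 1) ≤ s ^ (a - 1) :=
    Real.rpow_le_rpow_of_nonpos hs hst.le (by linarith)
  have h2 : Real.exp (-l * t) < Real.exp (-l * s) := by
    apply Real.exp_lt_exp.mpr; nlinarith
  have hlp : (0:ℝ) < l ^ a := Real.rpow_pos_of_pos hl a
  have hsp : (0:ℝ) < s ^ (a - 1) := Real.rpow_pos_of_pos hs _
  have key : l ^ a * t ^ (a-1) * Real.exp (-l*t) < l ^ a * s ^ (a-1) * Real.exp (-l*s) :=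
    calc l ^ a * t ^ (a-1) * Real.exp (-l*t)
        ≤ l ^ a * s ^ (a-1) * Real.exp (-l*t) :=
          mul_le_mul_of_nonneg_right (mul_le_mul_of_nonneg_left h1 hlp.le) (Real.exp_nonneg _)
      _ < l ^ a * s ^ (a-1) * Real.exp (-l*s) := by
          exact mul_lt_mul_of_pos_left h2 (by positivity)
  gcongr

lemma gammaDensity_anti {a l s t : ℝ} (ha : 0 < a) (ha1 : a ≤ 1) (hl : 0 < l)
    (hs : 0 < s) (hst : s ≤ t) : gammaDensity a l t ≤ gammaDensity a l s := by
  rcases eq_or_lt_of_le hst with rfl | h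
  · exact le_rfl
  · exact (gammaDensity_strictAnti ha ha1 hl hs h).le

lemma gammaDensity_measurable (a l : ℝ) : Measurable (gammaDensity a l) := by
  unfold gammaDensity
  apply Measurable.ite measurableSet_Ioi ?_ measurable_const
  fun_prop

lemma gammaDensity_integrable {a l : ℝ} (ha : 0 < a) (hl : 0 < l) :
    Integrable (gammaDensity a l) := by
  rw [← integrableOn_univ, ← Set.Iic_union_Ioi (a := (0:ℝ)), integrableOn_union]
  constructor
  · apply (integrableOn_congr_fun (g := fun _ => (0:ℝ)) ?_ measurableSet_Iic).mpr
      integrableOn_zero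
    intro t ht
    exact gammaDensity_of_nonpos (mem_Iic.mp ht)
  · have h := integrableOn_rpow_mul_exp_neg_mul_rpow (s := a - 1) (p := 1) (b := l)
      (by linarith) (by norm_num) hl
    simp only [Real.rpow_one] at h
    apply (integrableOn_congr_fun ?_ measurableSet_Ioi).mpr
      ((h.const_mul (l ^ a)).div_const (Real.Gamma a))
    intro t ht
    simp [gammaDensity, if_pos (mem_Ioi.mp ht), mul_assoc]

lemma setIntegral_lt_Ioi {f g : ℝ → ℝ}
    (hf : IntegrableOn f (Ioi (0:ℝ))) (hg : IntegrableOn g (Ioi (0:ℝ)))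
    (hlt : ∀ y ∈ Ioi (0:ℝ), f y < g y) :
    ∫ y in Ioi (0:ℝ), f y < ∫ y in Ioi (0:ℝ), g y := by
  rw [← sub_pos, ← integral_sub hg hf]
  rw [setIntegral_pos_iff_support_of_nonneg_ae]
  · refine lt_of_lt_of_le ?_ (measure_mono (subset_inter
      (fun y hy => sub_ne_zero.mpr (hlt y hy).ne') subset_rfl))
    simp [Real.volume_Ioi]
  · filter_upwards [ae_restrict_mem measurableSet_Ioi] with y hy
    exact sub_nonneg.mpr (hlt y hy).le
  · exact hg.sub hf

/-- If `α⁺ ≤ 1` and `α⁻ ≤ 1`, then the mode of the bilateral Gamma density is `0`: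
`f` is strictly increasing on `(-∞, 0)` and strictly decreasing on `(0, ∞)`. -/
theorem bilateralGammaDensity_mode_zero (ap lp am lm : ℝ)
    (hap : 0 < ap) (hlp : 0 < lp) (ham : 0 < am) (hlm : 0 < lm)
    (hap1 : ap ≤ 1) (ham1 : am ≤ 1) :
    StrictMonoOn (bilateralGammaDensity ap lp am lm) (Iio (0 : ℝ)) ∧
    StrictAntiOn (bilateralGammaDensity ap lp am lm) (Ioi (0 : ℝ)) := by
  have meas2 : ∀ x : ℝ, AEStronglyMeasurable
      (fun y => gammaDensity ap lp (x + y) * gammaDensity am lm y)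
      (volume.restrict (Ioi (0:ℝ))) := fun x =>
    (((gammaDensity_measurable ap lp).comp (measurable_const_add x)).mul
      (gammaDensity_measurable am lm)).aestronglyMeasurable
  have int2 : ∀ x : ℝ, 0 < x → IntegrableOn
      (fun y => gammaDensity ap lp (x + y) * gammaDensity am lm y) (Ioi (0:ℝ)) := by
    intro x hx
    apply Integrable.mono' (((gammaDensity_integrable ham hlm).integrableOn
      (s := Ioi 0)).const_mul (gammaDensity ap lp x)) (meas2 x)
    filter_upwards [ae_restrict_mem measurableSet_Ioi] with y hy
    rw [Real.norm_eq_abs, abs_of_nonneg (mul_nonneg (gammaDensity_nonneg hap hlp _)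
      (gammaDensity_nonneg ham hlm _))]
    exact mul_le_mul_of_nonneg_right
      (gammaDensity_anti hap hap1 hlp hx (by linarith [mem_Ioi.mp hy]))
      (gammaDensity_nonneg ham hlm _)
  have meas1 : ∀ x : ℝ, AEStronglyMeasurable
      (fun u => gammaDensity ap lp u * gammaDensity am lm (u - x))
      (volume.restrict (Ioi (0:ℝ))) := fun x =>
    ((gammaDensity_measurable ap lp).mul
      ((gammaDensity_measurable am lm).comp (measurable_id.sub_const x))).aestronglyMeasurable
  have int1 : ∀ x : ℝ, x < 0 → IntegrableOn
      (fun u => gammaDensity ap lp u * gammaDensity am lm (u - x)) (Ioi (0:ℝ)) := by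
    intro x hx
    apply Integrable.mono' (((gammaDensity_integrable hap hlp).integrableOn
      (s := Ioi 0)).mul_const (gammaDensity am lm (-x))) (meas1 x)
    filter_upwards [ae_restrict_mem measurableSet_Ioi] with u hu
    rw [Real.norm_eq_abs, abs_of_nonneg (mul_nonneg (gammaDensity_nonneg hap hlp _)
      (gammaDensity_nonneg ham hlm _))]
    exact mul_le_mul_of_nonneg_left
      (gammaDensity_anti ham ham1 hlm (neg_pos.mpr hx) (by linarith [mem_Ioi.mp hu]))
      (gammaDensity_nonneg hap hlp _)
  have repr : ∀ x : ℝ, bilateralGammaDensity ap lp am lm x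
      = ∫ u in Ioi (0:ℝ), gammaDensity ap lp u * gammaDensity am lm (u - x) := by
    intro x
    unfold bilateralGammaDensity
    rw [setIntegral_eq_integral_of_forall_compl_eq_zero (fun y hy => by
      rw [gammaDensity_of_nonpos (t := y) (not_lt.mp (by simpa using hy)), mul_zero])]
    rw [setIntegral_eq_integral_of_forall_compl_eq_zero (fun u hu => by
      rw [gammaDensity_of_nonpos (t := u) (not_lt.mp (by simpa using hu)), zero_mul])]
    calc ∫ y, gammaDensity ap lp (x + y) * gammaDensity am lm y
        = ∫ y, (fun u => gammaDensity ap lp u * gammaDensity am lm (u - x)) (x + y) := by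
          congr 1; funext y; simp
      _ = ∫ u, gammaDensity ap lp u * gammaDensity am lm (u - x) := by
          exact integral_add_left_eq_self
            (fun u => gammaDensity ap lp u * gammaDensity am lm (u - x)) x
  constructor
  · intro x hx x' hx' hxx'
    rw [repr x, repr x']
    have hx0 : x < 0 := mem_Iio.mp hx
    have hx0' : x' < 0 := mem_Iio.mp hx'
    apply setIntegral_lt_Ioi (int1 x hx0) (int1 x' hx0')
    intro u hu
    have hu0 : 0 < u := mem_Ioi.mp hu
    exact mul_lt_mul_of_pos_left
      (gammaDensity_strictAnti ham ham1 hlm (by linarith) (by linarith))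
      (gammaDensity_pos hap hlp hu0)
  · intro x hx x' hx' hxx'
    unfold bilateralGammaDensity
    apply setIntegral_lt_Ioi (int2 x' ((mem_Ioi.mp hx).trans hxx')) (int2 x (mem_Ioi.mp hx))
    intro y hy
    have hy0 : 0 < y := mem_Ioi.mp hy
    exact mul_lt_mul_of_pos_right
      (gammaDensity_strictAnti hap hap1 hlp (by linarith [mem_Ioi.mp hx]) (by linarith))
      (gammaDensity_pos ham hlm hy0)
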